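/- Dijkstra's algorithm with max-min path priorities correctly computes single-source widest paths: if vertices are processed in decreasing order of tentative priority, then when a vertex u is extracted its priority equals the true maxmin path weight B(s,u) from the source s. -/
import Mathlib


noncomputable section
open Classical

/-- The minimum weight of an edge along a list of vertices (a walk), `⊤` for walks
with no edges. -/
def pathMin {V : Type*} (w : V → V → ℝ) : List V → EReal
  | a :: b :: rest => min ((w a b : ℝ) : EReal) (pathMin w (b :: rest))
  | _ => ⊤

/-- Beatpath strength: the maximum over directed walks from `x` to `y` of the minimum
edge weight on the walk; `⊤` if `x = y`, `⊥` (= `sSup ∅`) if no walk exists. -/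
def beat {V : Type*} (w : V → V → ℝ) (x y : V) : EReal :=
  if x = y then ⊤
  else sSup {m : EReal | ∃ l : List V,
    l.head? = some x ∧ l.getLast? = some y ∧ m = pathMin w l}

/-- The Schulze order: `x < y` iff `B(x,y) < B(y,x)`. -/
def schulzeLt {V : Type*} (w : V → V → ℝ) (x y : V) : Prop :=
  beat w x y < beat w y x
section helpers
variable {V : Type*} (w : V → V → ℝ)

lemma pathMin_nil : pathMin w ([] : List V) = ⊤ := rfl
lemma pathMin_single (a : V) : pathMin w [a] = ⊤ := rfl
lemma pathMin_cons_cons (a b : V) (l : List V) :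
    pathMin w (a :: b :: l) = min ((w a b : ℝ) : EReal) (pathMin w (b :: l)) := rfl

lemma head?_append_of_eq {l : List V} {x : V} (h : l.head? = some x) (t : List V) :
    (l ++ t).head? = some x := by
  cases l with
  | nil => simp at h
  | cons a l' => simpa using h

lemma pathMin_append {l : List V} {x : V} (h : l.getLast? = some x) (v : V) :
    pathMin w (l ++ [v]) = min (pathMin w l) ((w x v : ℝ) : EReal) := by
  induction l with
  | nil => simp at h
  | cons a t ih =>
    cases t with
    | nil =>
      simp only [List.getLast?_singleton, Option.some_inj] at h
      subst h
      simp [pathMin_cons_cons, pathMin_single, pathMin_nil, min_comm]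
    | cons b r =>
      have h' : (b :: r).getLast? = some x := by simpa using h
      have := ih h'
      simp only [List.cons_append, pathMin_cons_cons] at *
      rw [this, min_assoc]

lemma le_beat {x y : V} (l : List V) (h1 : l.head? = some x) (h2 : l.getLast? = some y) :
    pathMin w l ≤ beat w x y := by
  unfold beat
  split
  · exact le_top
  · exact le_sSup ⟨l, h1, h2, rfl⟩

lemma pathMin_mem (l : List V) :
    pathMin w l ∈ insert (⊤ : EReal) (Set.range fun p : V × V => ((w p.1 p.2 : ℝ) : EReal)) := by
  induction l with
  | nil => simp [pathMin_nil]
  | cons a t ih =>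
    cases t with
    | nil => simp [pathMin_single]
    | cons b r =>
      rw [pathMin_cons_cons]
      rcases le_total (((w a b : ℝ) : EReal)) (pathMin w (b :: r)) with h | h
      · rw [min_eq_left h]; exact Set.mem_insert_iff.mpr (Or.inr ⟨(a, b), rfl⟩)
      · rw [min_eq_right h]; exact ih

lemma beat_exists [Fintype V] {x y : V} (hxy : x ≠ y) :
    ∃ l : List V, l.head? = some x ∧ l.getLast? = some y ∧ beat w x y = pathMin w l := by
  set S := {m : EReal | ∃ l : List V,
    l.head? = some x ∧ l.getLast? = some y ∧ m = pathMin w l} with hS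
  have hne : S.Nonempty := ⟨pathMin w [x, y], [x, y], by simp, by simp, rfl⟩
  have hfin : S.Finite := by
    apply Set.Finite.subset (((Set.finite_range fun p : V × V => ((w p.1 p.2 : ℝ) : EReal)).insert ⊤))
    rintro m ⟨l, -, -, rfl⟩
    exact pathMin_mem w l
  obtain ⟨l, h1, h2, heq⟩ := hne.csSup_mem hfin
  exact ⟨l, h1, h2, by rw [beat, if_neg hxy]; exact heq⟩

lemma beat_refl (x : V) : beat w x x = ⊤ := by rw [beat, if_pos rfl]

lemma beat_triangle [Fintype V] (s x v : V) :
    min (beat w s x) ((w x v : ℝ) : EReal) ≤ beat w s v := by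
  by_cases hsv : s = v
  · subst hsv; rw [beat_refl]; exact le_top
  by_cases hsx : s = x
  · subst hsx
    refine (min_le_right _ _).trans ?_
    have := le_beat w (x := s) (y := v) [s, v] rfl (by simp)
    simpa [pathMin_cons_cons, pathMin_single, min_eq_left le_top] using this
  · obtain ⟨l, h1, h2, heq⟩ := beat_exists w hsx
    rw [heq, ← pathMin_append w h2 v]
    exact le_beat w (l ++ [v]) (head?_append_of_eq h1 _) (by simp)

end helpers

/-- Correctness of Dijkstra's algorithm with max-min path priorities for
single-source widest paths. The vertices are processed in the order
`u 0, u 1, ...` (a bijective enumeration); `prio k v` is the tentative priority of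
vertex `v` just before step `k`. Initially the source `s` has priority `⊤` and all
other vertices `⊥`; at step `k` the unprocessed vertex `u k` of maximum tentative
priority is extracted and every edge `u k → v` to an unprocessed vertex `v` is
relaxed via `prio (k+1) v = max (prio k v) (min (prio k (u k)) (w (u k) v))`,
priorities of processed vertices being frozen. Then when each vertex `u k` is
extracted, its priority equals the true maxmin path weight `B(s, u k)`. -/
theorem dijkstra_widest_correct {V : Type*} [Fintype V] (w : V → V → ℝ) (s : V)
    (u : Fin (Fintype.card V) → V) (hu : Function.Bijective u)
    (prio : ℕ → V → EReal)
    (hinit : ∀ v, prio 0 v = if v = s then ⊤ else ⊥)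
    (hfrozen : ∀ k : Fin (Fintype.card V), ∀ v, (∃ j : Fin (Fintype.card V), j ≤ k ∧ u j = v) →
      prio (k + 1) v = prio k v)
    (hrelax : ∀ k : Fin (Fintype.card V), ∀ v, (¬ ∃ j : Fin (Fintype.card V), j ≤ k ∧ u j = v) →
      prio (k + 1) v = max (prio k v) (min (prio k (u k)) ((w (u k) v : ℝ) : EReal)))
    (hmax : ∀ k j : Fin (Fintype.card V), k ≤ j → prio k (u j) ≤ prio k (u k)) :
    ∀ k : Fin (Fintype.card V), prio k (u k) = beat w s (u k) := by
  -- one-step monotonicity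
  have step : ∀ t : ℕ, t < Fintype.card V → ∀ v, prio t v ≤ prio (t + 1) v := by
    intro t ht v
    by_cases hp : ∃ j : Fin (Fintype.card V), j ≤ ⟨t, ht⟩ ∧ u j = v
    · exact (hfrozen ⟨t, ht⟩ v hp).ge
    · rw [hrelax ⟨t, ht⟩ v hp]; exact le_max_left _ _
  -- monotonicity
  have mono : ∀ v, ∀ b : ℕ, b ≤ Fintype.card V → ∀ a, a ≤ b → prio a v ≤ prio b v := by
    intro v b
    induction b with
    | zero => intro _ a ha; rw [Nat.le_zero.mp ha]
    | succ b ih =>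
      intro hb a ha
      rcases Nat.eq_or_lt_of_le ha with h | h
      · rw [h]
      · exact (ih (by omega) a (by omega)).trans (step b (by omega) v)
  -- soundness
  have sound : ∀ t : ℕ, t ≤ Fintype.card V → ∀ v, prio t v ≤ beat w s v := by
    intro t
    induction t with
    | zero =>
      intro _ v
      rw [hinit]
      split
      · next h => rw [h, beat_refl]
      · exact bot_le
    | succ t ih =>
      intro ht v
      have ht' : t < Fintype.card V := ht
      by_cases hp : ∃ j : Fin (Fintype.card V), j ≤ ⟨t, ht'⟩ ∧ u j = v
      · rw [hfrozen ⟨t, ht'⟩ v hp]; exact ih (le_of_lt ht') v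
      · rw [hrelax ⟨t, ht'⟩ v hp]
        refine max_le (ih (le_of_lt ht') v) ?_
        exact (min_le_min (ih (le_of_lt ht') _) le_rfl).trans (beat_triangle w s _ v)
  -- the source is extracted first
  intro k
  have hpos : 0 < Fintype.card V := k.pos
  have hu0 : u ⟨0, hpos⟩ = s := by
    obtain ⟨j, hj⟩ := hu.2 s
    have h := hmax ⟨0, hpos⟩ j (by simp [Fin.le_def])
    rw [hj, hinit, if_pos rfl] at h
    have h0 := hinit (u ⟨0, hpos⟩)
    by_cases hc : u ⟨0, hpos⟩ = s
    · exact hc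
    · rw [if_neg hc] at h0; rw [h0] at h; exact absurd (top_le_iff.mp h) (by simp)
  -- main strong induction
  suffices H : ∀ n : ℕ, ∀ k : Fin (Fintype.card V), (k : ℕ) = n → prio k (u k) = beat w s (u k) from
    H k k rfl
  intro n
  induction n using Nat.strong_induction_on with
  | _ n IH =>
    intro k hk
    have IH' : ∀ j : Fin (Fintype.card V), j < k → prio j (u j) = beat w s (u j) := fun j hj =>
      IH j (hk ▸ hj) j rfl
    -- key claim: for any walk from s to an unprocessed vertex y,
    -- the priority of u k dominates the walk's min weight
    have key : ∀ l : List V, ∀ y : V, l.head? = some s → l.getLast? = some y →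
        (¬ ∃ j : Fin (Fintype.card V), j < k ∧ u j = y) → pathMin w l ≤ prio k (u k) := by
      intro l
      induction l using List.reverseRecOn with
      | nil => intro y h1 _ _; simp at h1
      | append_singleton l' a ihl =>
        intro y h1 h2 hy
        have hya : a = y := by simpa using h2
        subst hya
        rcases hl' : l'.getLast? with _ | x
        · -- l' = [], so the walk is [s] and y = s, forcing k = 0
          have hnil : l' = [] := List.getLast?_eq_none_iff.mp hl'
          subst hnil
          have hsa : a = s := by simpa using h1
          have hk0 : (k : ℕ) = 0 := by
            by_contra h0
            exact hy ⟨⟨0, hpos⟩, by simpa [Fin.lt_def] using Nat.pos_of_ne_zero h0,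
              by rw [hu0, ← hsa]⟩
          have hkeq : k = ⟨0, hpos⟩ := Fin.ext hk0
          have htop : prio (k : ℕ) (u k) = ⊤ := by
            rw [hkeq, hu0]
            simpa using hinit s
          rw [htop]
          exact le_top
        · -- l' is nonempty with last vertex x
          have hl'ne : l' ≠ [] := by intro h; rw [h] at hl'; simp at hl'
          have h1' : l'.head? = some s := by
            cases l' with
            | nil => exact absurd rfl hl'ne
            | cons b t => simpa using h1
          rw [pathMin_append w hl' a]
          by_cases hx : ∃ j : Fin (Fintype.card V), j < k ∧ u j = x
          · -- x was processed at some step j < k: use IH' and the relaxation at step j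
            obtain ⟨j, hjk, hjx⟩ := hx
            have h5 : pathMin w l' ≤ prio (j : ℕ) (u j) := by
              rw [IH' j hjk, hjx]; exact le_beat w l' h1' hl'
            have hyj : ¬ ∃ j' : Fin (Fintype.card V), j' ≤ j ∧ u j' = a := by
              rintro ⟨j', hj', hj'y⟩
              exact hy ⟨j', lt_of_le_of_lt hj' hjk, hj'y⟩
            have h6 : min (pathMin w l') ((w x a : ℝ) : EReal) ≤ prio ((j : ℕ) + 1) a := by
              rw [hrelax j a hyj]
              refine le_max_of_le_right (min_le_min h5 (le_of_eq ?_))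
              rw [hjx]
            have h7 : prio ((j : ℕ) + 1) a ≤ prio (k : ℕ) a :=
              mono a k (le_of_lt k.isLt) ((j : ℕ) + 1) (Fin.lt_def.mp hjk)
            obtain ⟨j'', hj''⟩ := hu.2 a
            have hkj'' : k ≤ j'' := not_lt.mp (fun h => hy ⟨j'', h, hj''⟩)
            have h8 : prio (k : ℕ) a ≤ prio (k : ℕ) (u k) := by
              rw [← hj'']; exact hmax k j'' hkj''
            exact h6.trans (h7.trans h8)
          · -- x itself unprocessed: apply the walk induction hypothesis to l'
            exact (min_le_left _ _).trans (ihl x h1' hl' hx)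
    -- conclude
    by_cases hks : u k = s
    · have hkeq : k = ⟨0, hpos⟩ := hu.1 (by rw [hks, hu0])
      rw [hkeq, hu0, beat_refl]
      simpa using hinit s
    · have hsk : s ≠ u k := fun h => hks h.symm
      obtain ⟨l, h1, h2, heq⟩ := beat_exists w hsk
      refine le_antisymm (sound k (le_of_lt k.isLt) (u k)) ?_
      rw [heq]
      exact key l (u k) h1 h2 (by rintro ⟨j, hj, hju⟩; exact absurd (hu.1 hju) (ne_of_lt hj))
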